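/- If f : [0,1] → ℝ is continuously differentiable, then for every n > 1 and x ∈ [0,1], |R_n(f;x) − f(x)| ≤ ((4 + 6√3)/27) n^{−1/2} ω₁(n^{−1/2}), where ω₁ is the modulus of continuity of f′. -/

import Mathlib

/-- Generalized rising factorial with increment `h`: `x^(m,h) = x(x+h)···(x+(m-1)h)`. -/
noncomputable def rfac (x h : ℝ) (m : ℕ) : ℝ := ∏ i ∈ Finset.range m, (x + i * h)

/-- Pólya urn probability `p_{n,k}^{a,b,c}`. -/
noncomputable def polyaProb (a b c : ℝ) (n k : ℕ) : ℝ :=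
  (n.choose k : ℝ) * rfac a c k * rfac b c (n - k) / rfac (a + b) c n

/-- The operator `R_n(f;x)` with `c = -min{x,1-x}/(n-1)`. -/
noncomputable def Rop (n : ℕ) (f : ℝ → ℝ) (x : ℝ) : ℝ :=
  ∑ k ∈ Finset.range (n + 1),
    polyaProb x (1 - x) (-(min x (1 - x)) / ((n : ℝ) - 1)) n k * f ((k : ℝ) / n)

/-- Modulus of continuity of `f` on `[a,b]`. -/
noncomputable def modulus (f : ℝ → ℝ) (a b δ : ℝ) : ℝ :=
  sSup {d : ℝ | ∃ u ∈ Set.Icc a b, ∃ v ∈ Set.Icc a b, |u - v| ≤ δ ∧ d = |f u - f v|}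

/-!
The weights of `R_n(f; x)` are Pólya–Eggenberger probabilities with `a + b = 1`. Vandermonde's
convolution for rising factorials shows that they sum to `1`, reproduce linear functions and have
second central moment `x(1 - x)(1 + nc)/(n(1 + c))`, which for the chosen `c` is at most `4/(27n)`.
The mean value theorem gives `|f t - f x - f' x (t - x)| ≤ ω₁(δ)(|t - x| + (t - x)²/δ)`, and
Cauchy–Schwarz bounds the first absolute moment by the square root of the second; with
`δ = n^{-1/2}` the constant is `√(4/27) + 4/27 = (4 + 6√3)/27`.
-/

open Finset Set

section RisingFactorial

lemma rfac_succ (x h : ℝ) (m : ℕ) : rfac x h (m + 1) = rfac x h m * (x + m * h) :=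
  prod_range_succ _ m

lemma rfac_succ' (x h : ℝ) (m : ℕ) : rfac x h (m + 1) = x * rfac (x + h) h m := by
  rw [rfac, prod_range_succ', rfac, mul_comm]
  congr 1
  · simp
  · exact prod_congr rfl fun i _ => by push_cast; ring

lemma rfac_pos {x h : ℝ} {m : ℕ} (H : ∀ i < m, 0 < x + i * h) : 0 < rfac x h m :=
  prod_pos fun i hi => H i (mem_range.mp hi)

lemma rfac_nonneg {x h : ℝ} {m : ℕ} (H : ∀ i < m, 0 ≤ x + i * h) : 0 ≤ rfac x h m :=
  prod_nonneg fun i hi => H i (mem_range.mp hi)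

theorem sum_choose_mul_rfac_mul_rfac (a b c : ℝ) (n : ℕ) :
    ∑ k ∈ range (n + 1), (n.choose k : ℝ) * rfac a c k * rfac b c (n - k) = rfac (a + b) c n := by
  induction n with
  | zero => simp [rfac]
  | succ n ih =>
    simp only [mul_assoc] at ih ⊢
    rw [sum_choose_succ_mul (fun i j => rfac a c i * rfac b c j), rfac_succ, ← ih, sum_mul,
      ← sum_add_distrib]
    refine sum_congr rfl fun i hi => ?_
    have hi : i ≤ n := Nat.lt_succ_iff.mp (mem_range.mp hi)
    rw [show n + 1 - i = n - i + 1 by omega, rfac_succ, rfac_succ, Nat.cast_sub hi]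
    ring

lemma sum_mul_choose_mul_rfac_succ (a c : ℝ) (w g : ℕ → ℝ) (n : ℕ) :
    ∑ k ∈ range (n + 2), k * w k * ((n + 1).choose k : ℝ) * rfac a c k * g (n + 1 - k) =
      (n + 1) * a *
        ∑ j ∈ range (n + 1), w (j + 1) * (n.choose j : ℝ) * rfac (a + c) c j * g (n - j) := by
  rw [sum_range_succ', mul_sum]
  simp only [Nat.cast_zero, zero_mul, add_zero]
  refine sum_congr rfl fun j _ => ?_
  have hchoose : ((n + 1).choose (j + 1) : ℝ) * (j + 1) = (n + 1) * n.choose j := by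
    exact_mod_cast (Nat.add_one_mul_choose_eq n j).symm
  rw [show n + 1 - (j + 1) = n - j by omega, rfac_succ']
  push_cast
  linear_combination (w (j + 1) * a * rfac (a + c) c j * g (n - j)) * hchoose

lemma sum_mul_choose_mul_rfac_mul_rfac (a b c : ℝ) (n : ℕ) :
    ∑ k ∈ range (n + 2), k * ((n + 1).choose k : ℝ) * rfac a c k * rfac b c (n + 1 - k) =
      (n + 1) * a * rfac (a + b + c) c n := by
  have h := sum_mul_choose_mul_rfac_succ a c 1 (rfac b c) n
  simp only [Pi.one_apply, mul_one, one_mul] at h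
  rw [h, sum_choose_mul_rfac_mul_rfac, add_right_comm]

lemma sum_descFactorial_mul_choose_mul_rfac_mul_rfac (a b c : ℝ) (n : ℕ) :
    ∑ k ∈ range (n + 3),
        k * (k - 1) * ((n + 2).choose k : ℝ) * rfac a c k * rfac b c (n + 2 - k) =
      (n + 2) * (n + 1) * a * (a + c) * rfac (a + b + 2 * c) c n := by
  have h := sum_mul_choose_mul_rfac_succ a c (fun k => (k : ℝ) - 1) (rfac b c) (n + 1)
  simp only [Nat.cast_add_one, add_sub_cancel_right] at h
  rw [h, sum_mul_choose_mul_rfac_mul_rfac, show a + c + b + c = a + b + 2 * c by ring]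
  ring

end RisingFactorial

section PolyaUrn

variable {a b c : ℝ} {n : ℕ}

lemma polyaProb_nonneg {k : ℕ} (hk : k ≤ n) (ha : ∀ i < n, 0 ≤ a + i * c)
    (hb : ∀ i < n, 0 ≤ b + i * c) (hab : 0 ≤ rfac (a + b) c n) : 0 ≤ polyaProb a b c n k :=
  div_nonneg (mul_nonneg (mul_nonneg (Nat.cast_nonneg _)
    (rfac_nonneg fun i hi => ha i (by omega))) (rfac_nonneg fun i hi => hb i (by omega))) hab

lemma sum_polyaProb_mul (g : ℕ → ℝ) :
    ∑ k ∈ range (n + 1), polyaProb a b c n k * g k =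
      (∑ k ∈ range (n + 1), g k * (n.choose k : ℝ) * rfac a c k * rfac b c (n - k)) /
        rfac (a + b) c n := by
  rw [sum_div]
  exact sum_congr rfl fun k _ => by rw [polyaProb]; ring

lemma sum_polyaProb (h : rfac (a + b) c n ≠ 0) : ∑ k ∈ range (n + 1), polyaProb a b c n k = 1 := by
  simp only [polyaProb, ← sum_div, sum_choose_mul_rfac_mul_rfac, div_self h]

lemma sum_polyaProb_mul_cast (h : rfac (a + b) c n ≠ 0) :
    ∑ k ∈ range (n + 1), polyaProb a b c n k * k = n * a / (a + b) := by
  cases n with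
  | zero => simp
  | succ n =>
    obtain ⟨h₁, h₂⟩ := mul_ne_zero_iff.mp (rfac_succ' (a + b) c n ▸ h)
    rw [sum_polyaProb_mul, sum_mul_choose_mul_rfac_mul_rfac, rfac_succ']
    field_simp
    push_cast
    ring

lemma sum_polyaProb_mul_cast_mul_cast_sub_one (h : rfac (a + b) c n ≠ 0) :
    ∑ k ∈ range (n + 1), polyaProb a b c n k * (k * (k - 1)) =
      n * (n - 1) * a * (a + c) / ((a + b) * (a + b + c)) := by
  match n, h with
  | 0, _ => simp
  | 1, _ => simp [sum_range_succ]
  | n + 2, h =>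
    have hfactor : rfac (a + b) c (n + 2) = (a + b) * ((a + b + c) * rfac (a + b + 2 * c) c n) := by
      rw [rfac_succ', rfac_succ', show a + b + c + c = a + b + 2 * c by ring]
    obtain ⟨h₁, h₂, h₃⟩ : a + b ≠ 0 ∧ a + b + c ≠ 0 ∧ rfac (a + b + 2 * c) c n ≠ 0 := by
      simpa [hfactor, not_or] using h
    rw [sum_polyaProb_mul, sum_descFactorial_mul_choose_mul_rfac_mul_rfac, hfactor]
    field_simp
    push_cast
    ring

lemma sum_polyaProb_mul_cast_div (hn : n ≠ 0) (h : rfac 1 c n ≠ 0) :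
    ∑ k ∈ range (n + 1), polyaProb a (1 - a) c n k * (k / n) = a := by
  have hmean := sum_polyaProb_mul_cast (a := a) (b := 1 - a) (by simpa using h)
  simp only [add_sub_cancel, div_one] at hmean
  simp only [mul_div_assoc', ← sum_div, hmean]
  field_simp

lemma sum_polyaProb_mul_sq_sub (hn : n ≠ 0) (h : rfac 1 c n ≠ 0) (hc : 1 + c ≠ 0) :
    ∑ k ∈ range (n + 1), polyaProb a (1 - a) c n k * (k / n - a) ^ 2 =
      a * (1 - a) * (1 + n * c) / (n * (1 + c)) := by
  have h' : rfac (a + (1 - a)) c n ≠ 0 := by simpa using h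
  have expand : ∀ k : ℕ, polyaProb a (1 - a) c n k * (k / n - a) ^ 2 =
      (polyaProb a (1 - a) c n k * (k * (k - 1)) +
        (1 - 2 * a * n) * (polyaProb a (1 - a) c n k * k) +
        a ^ 2 * n ^ 2 * polyaProb a (1 - a) c n k) / n ^ 2 := by
    intro k
    field_simp
    ring
  simp only [expand, ← sum_div, sum_add_distrib, ← mul_sum, sum_polyaProb h',
    sum_polyaProb_mul_cast h', sum_polyaProb_mul_cast_mul_cast_sub_one h', add_sub_cancel]
  field_simp
  ring

end PolyaUrn

section ModulusOfContinuity

variable {g : ℝ → ℝ} {a b δ : ℝ}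

lemma modulus_nonneg (g : ℝ → ℝ) (a b δ : ℝ) : 0 ≤ modulus g a b δ :=
  Real.sSup_nonneg fun _ ⟨_, _, _, _, _, hd⟩ => hd ▸ abs_nonneg _

lemma le_modulus (hg : ContinuousOn g (Icc a b)) {u v : ℝ} (hu : u ∈ Icc a b) (hv : v ∈ Icc a b)
    (huv : |u - v| ≤ δ) : |g u - g v| ≤ modulus g a b δ := by
  obtain ⟨C, hC⟩ := isCompact_Icc.exists_bound_of_continuousOn hg
  refine le_csSup ⟨2 * C, ?_⟩ ⟨u, hu, v, hv, huv, rfl⟩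
  rintro _ ⟨u', hu', v', hv', -, rfl⟩
  have h₁ := hC u' hu'
  have h₂ := hC v' hv'
  rw [Real.norm_eq_abs] at h₁ h₂
  linarith [abs_sub (g u') (g v')]

/-- Cut `[v, u]` into `⌊|u - v| / δ⌋ + 1` pieces of length at most `δ`. -/
lemma abs_sub_le_one_add_div_mul_modulus (hg : ContinuousOn g (Icc a b)) (hδ : 0 < δ)
    {u v : ℝ} (hu : u ∈ Icc a b) (hv : v ∈ Icc a b) :
    |g u - g v| ≤ (1 + |u - v| / δ) * modulus g a b δ := by
  set M : ℕ := ⌊|u - v| / δ⌋₊ + 1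
  have hM : (0 : ℝ) < M := by positivity
  have hMlt : |u - v| / δ < M := by simpa [M] using Nat.lt_floor_add_one (|u - v| / δ)
  set w : ℕ → ℝ := fun i => v + ((i : ℝ) / M) • (u - v)
  have hw : ∀ i ≤ M, w i ∈ Icc a b := fun i hi =>
    (convex_Icc a b).add_smul_sub_mem hv hu
      ⟨by positivity, div_le_one_of_le₀ (by exact_mod_cast hi) hM.le⟩
  have hstep : ∀ i, |w (i + 1) - w i| ≤ δ := fun i => by
    have : w (i + 1) - w i = (u - v) / M := by
      simp only [w, smul_eq_mul]; push_cast; field_simp; ring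
    rw [this, abs_div, abs_of_pos hM, div_le_iff₀ hM]
    rw [div_lt_iff₀ hδ] at hMlt
    linarith
  have htelescope : g u - g v = ∑ i ∈ range M, (g (w (i + 1)) - g (w i)) := by
    rw [sum_range_sub (fun i => g (w i))]
    simp [w, hM.ne']
  calc |g u - g v| ≤ ∑ i ∈ range M, |g (w (i + 1)) - g (w i)| :=
        htelescope ▸ abs_sum_le_sum_abs _ _
    _ ≤ ∑ _i ∈ range M, modulus g a b δ := sum_le_sum fun i hi =>
        le_modulus hg (hw _ (mem_range.mp hi)) (hw _ (mem_range.mp hi).le) (hstep i)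
    _ = M * modulus g a b δ := by rw [sum_const, card_range, nsmul_eq_mul]
    _ ≤ (1 + |u - v| / δ) * modulus g a b δ := by
        gcongr
        · exact modulus_nonneg g a b δ
        · have := Nat.floor_le (div_nonneg (abs_nonneg (u - v)) hδ.le)
          push_cast [M]
          linarith

/-- Mean value theorem applied to `t ↦ f t - f' x * t`. -/
lemma abs_sub_sub_mul_le_modulus {f f' : ℝ → ℝ} (hf : ∀ t ∈ Icc a b, HasDerivAt f (f' t) t)
    (hf' : ContinuousOn f' (Icc a b)) (hδ : 0 < δ) {x t : ℝ} (hx : x ∈ Icc a b)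
    (ht : t ∈ Icc a b) :
    |f t - f x - f' x * (t - x)| ≤ (|t - x| + (t - x) ^ 2 / δ) * modulus f' a b δ := by
  have hsub : uIcc x t ⊆ Icc a b := (convex_Icc a b).ordConnected.uIcc_subset hx ht
  have hbound : ∀ s ∈ uIcc x t, ‖f' s - f' x‖ ≤ (1 + |t - x| / δ) * modulus f' a b δ := by
    intro s hs
    calc ‖f' s - f' x‖ ≤ (1 + |s - x| / δ) * modulus f' a b δ :=
          abs_sub_le_one_add_div_mul_modulus hf' hδ (hsub hs) hx
      _ ≤ (1 + |t - x| / δ) * modulus f' a b δ := by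
          gcongr (1 + ?_ / δ) * _
          · exact modulus_nonneg f' a b δ
          · exact abs_sub_left_of_mem_uIcc hs
  have hderiv : ∀ s ∈ uIcc x t,
      HasDerivWithinAt (fun s => f s - f' x * s) (f' s - f' x) (uIcc x t) s := fun s hs =>
    ((hf s (hsub hs)).sub ((hasDerivAt_id s).const_mul (f' x))).hasDerivWithinAt.congr_deriv
      (by simp)
  have hmvt := (convex_uIcc x t).norm_image_sub_le_of_norm_hasDerivWithin_le hderiv hbound
    left_mem_uIcc right_mem_uIcc
  rw [Real.norm_eq_abs, Real.norm_eq_abs] at hmvt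
  calc |f t - f x - f' x * (t - x)| = |f t - f' x * t - (f x - f' x * x)| := by ring_nf
    _ ≤ (1 + |t - x| / δ) * modulus f' a b δ * |t - x| := hmvt
    _ = (|t - x| + (t - x) ^ 2 / δ) * modulus f' a b δ := by rw [← sq_abs (t - x)]; ring

end ModulusOfContinuity

section PositiveLinearFunctional

variable {ι : Type*} (s : Finset ι) {p : ι → ℝ}

lemma sum_mul_abs_le_sqrt_sum_mul_sq (hp : ∀ i ∈ s, 0 ≤ p i) (hp₁ : ∑ i ∈ s, p i = 1)
    (d : ι → ℝ) :
    ∑ i ∈ s, p i * |d i| ≤ √(∑ i ∈ s, p i * d i ^ 2) := by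
  refine Real.le_sqrt_of_sq_le ?_
  simpa [hp₁] using sum_sq_le_sum_mul_sum_of_sq_le_mul s hp
    (fun i hi => mul_nonneg (hp i hi) (sq_nonneg (d i)))
    fun i _ => le_of_eq (by rw [mul_pow, sq_abs]; ring)

theorem abs_sum_mul_sub_le_modulus {t : ι → ℝ} {f f' : ℝ → ℝ} {a b x δ : ℝ}
    (hf : ∀ u ∈ Icc a b, HasDerivAt f (f' u) u) (hf' : ContinuousOn f' (Icc a b)) (hδ : 0 < δ)
    (hx : x ∈ Icc a b) (ht : ∀ i ∈ s, t i ∈ Icc a b) (hp : ∀ i ∈ s, 0 ≤ p i)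
    (hp₁ : ∑ i ∈ s, p i = 1) (hmean : ∑ i ∈ s, p i * t i = x) :
    |∑ i ∈ s, p i * f (t i) - f x| ≤
      (√(∑ i ∈ s, p i * (t i - x) ^ 2) + (∑ i ∈ s, p i * (t i - x) ^ 2) / δ) *
        modulus f' a b δ := by
  have hdecomp : ∑ i ∈ s, p i * f (t i) - f x =
      ∑ i ∈ s, p i * (f (t i) - f x - f' x * (t i - x)) := by
    simp only [mul_sub, sum_sub_distrib, ← sum_mul, hp₁, mul_left_comm (p _) (f' x), ← mul_sum,
      hmean]
    ring
  calc |∑ i ∈ s, p i * f (t i) - f x|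
      ≤ ∑ i ∈ s, |p i * (f (t i) - f x - f' x * (t i - x))| := hdecomp ▸ abs_sum_le_sum_abs _ _
    _ ≤ ∑ i ∈ s, p i * ((|t i - x| + (t i - x) ^ 2 / δ) * modulus f' a b δ) := by
        refine sum_le_sum fun i hi => ?_
        rw [abs_mul, abs_of_nonneg (hp i hi)]
        exact mul_le_mul_of_nonneg_left (abs_sub_sub_mul_le_modulus hf hf' hδ hx (ht i hi))
          (hp i hi)
    _ = (∑ i ∈ s, p i * |t i - x| + (∑ i ∈ s, p i * (t i - x) ^ 2) / δ) *
          modulus f' a b δ := by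
        rw [add_mul, sum_mul, sum_div, sum_mul, ← sum_add_distrib]
        exact sum_congr rfl fun i _ => by ring
    _ ≤ _ := by
        gcongr
        · exact modulus_nonneg f' a b δ
        · exact sum_mul_abs_le_sqrt_sum_mul_sq s hp hp₁ _

end PositiveLinearFunctional

lemma mul_one_sub_sq_le {μ : ℝ} (h : μ ≤ 4 / 3) : μ * (1 - μ) ^ 2 ≤ 4 / 27 := by
  nlinarith [mul_nonneg (sq_nonneg (3 * μ - 1)) (by linarith : (0 : ℝ) ≤ 4 - 3 * μ)]

/-- Uses `m - (m + 1)μ ≤ (1 - μ)(m - μ)`. -/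
lemma mul_one_sub_mul_sub_le {μ m : ℝ} (hμ₀ : 0 ≤ μ) (hμ₁ : μ ≤ 1) (hm : μ ≤ m) :
    μ * (1 - μ) * (m - (m + 1) * μ) ≤ 4 / 27 * (m - μ) := by
  have h₁ : μ * (1 - μ) * (m - (m + 1) * μ) ≤ μ * (1 - μ) ^ 2 * (m - μ) := by
    nlinarith [mul_nonneg (mul_nonneg hμ₀ (by linarith : (0 : ℝ) ≤ 1 - μ)) (sq_nonneg μ)]
  nlinarith [mul_le_mul_of_nonneg_right (mul_one_sub_sq_le (by linarith : μ ≤ 4 / 3))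
    (by linarith : (0 : ℝ) ≤ m - μ)]

lemma sqrt_add_div_le_of_le_mul_sq {V K δ : ℝ} (hδ : 0 < δ) (hV : V ≤ K * δ ^ 2) :
    √V + V / δ ≤ (√K + K) * δ := by
  have hsqrt : √V ≤ √K * δ := by
    calc √V ≤ √(K * δ ^ 2) := Real.sqrt_le_sqrt hV
      _ = √K * δ := by rw [Real.sqrt_mul' _ (sq_nonneg δ), Real.sqrt_sq hδ.le]
  have hdiv : V / δ ≤ K * δ := by
    rw [div_le_iff₀ hδ]
    linarith
  linarith

section Rop

variable {n : ℕ} {x : ℝ}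

noncomputable def ropIncrement (n : ℕ) (x : ℝ) : ℝ := -min x (1 - x) / ((n : ℝ) - 1)

lemma neg_min_le_cast_mul_ropIncrement (hx : x ∈ Icc (0 : ℝ) 1) {i : ℕ} (hi : i < n) :
    -min x (1 - x) ≤ i * ropIncrement n x := by
  have hi' : (i : ℝ) ≤ n - 1 := by
    have : (i : ℝ) + 1 ≤ n := by exact_mod_cast hi
    linarith
  have hμ : 0 ≤ min x (1 - x) := le_min hx.1 (by linarith [hx.2])
  rw [ropIncrement, mul_div_assoc', mul_neg, neg_div, neg_le_neg_iff, mul_comm, mul_div_assoc]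
  exact mul_le_of_le_one_right hμ (div_le_one_of_le₀ hi' (by linarith))

lemma polyaProb_ropIncrement_nonneg (hx : x ∈ Icc (0 : ℝ) 1) {k : ℕ} (hk : k ≤ n) :
    0 ≤ polyaProb x (1 - x) (ropIncrement n x) n k := by
  refine polyaProb_nonneg hk (fun i hi => ?_) (fun i hi => ?_) (rfac_nonneg fun i hi => ?_) <;>
    linarith [neg_min_le_cast_mul_ropIncrement hx hi, min_le_left x (1 - x),
      min_le_right x (1 - x)]

lemma rfac_one_ropIncrement_pos (hx : x ∈ Icc (0 : ℝ) 1) : 0 < rfac 1 (ropIncrement n x) n :=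
  rfac_pos fun i hi => by
    linarith [neg_min_le_cast_mul_ropIncrement hx hi, min_le_left x (1 - x), min_le_right x (1 - x)]

lemma sum_polyaProb_ropIncrement_mul_sq_sub_le (hx : x ∈ Icc (0 : ℝ) 1) (hn : 2 ≤ n) :
    ∑ k ∈ range (n + 1), polyaProb x (1 - x) (ropIncrement n x) n k * (k / n - x) ^ 2 ≤
      4 / 27 * (1 / n) := by
  set c := ropIncrement n x
  have hn₂ : (2 : ℝ) ≤ n := by exact_mod_cast hn
  have hcμ : c * (n - 1) = -min x (1 - x) := by
    have : (n : ℝ) - 1 ≠ 0 := by linarith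
    simp only [c, ropIncrement]
    field_simp
  have hxμ : x * (1 - x) = min x (1 - x) * (1 - min x (1 - x)) := by
    rcases le_total x (1 - x) with h | h
    · rw [min_eq_left h]
    · rw [min_eq_right h]; ring
  have hμ₀ : 0 ≤ min x (1 - x) := le_min hx.1 (by linarith [hx.2])
  have hμ₁ : min x (1 - x) ≤ 1 / 2 := by
    rcases le_total x (1 - x) with h | h <;> simp [h] <;> linarith
  have hc : 0 < 1 + c := by
    have := neg_min_le_cast_mul_ropIncrement hx (show 1 < n by omega)
    rw [Nat.cast_one, one_mul] at this
    linarith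
  have hcleared : min x (1 - x) * (1 - min x (1 - x)) * (1 + n * c) ≤ 4 / 27 * (1 + c) := by
    refine le_of_mul_le_mul_right ?_ (by linarith : (0 : ℝ) < n - 1)
    have := mul_one_sub_mul_sub_le hμ₀ (by linarith) (by linarith : min x (1 - x) ≤ n - 1)
    linear_combination this + (min x (1 - x) * (1 - min x (1 - x)) * n - 4 / 27) * hcμ
  rw [sum_polyaProb_mul_sq_sub (by omega) (rfac_one_ropIncrement_pos hx).ne' hc.ne', hxμ,
    div_le_iff₀ (by positivity : (0 : ℝ) < n * (1 + c))]
  calc _ ≤ 4 / 27 * (1 + c) := hcleared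
    _ = 4 / 27 * (1 / n) * (n * (1 + c)) := by field_simp

end Rop

theorem Rop_deriv_estimate_uniform (f f' : ℝ → ℝ)
    (hf : ∀ t ∈ Set.Icc (0 : ℝ) 1, HasDerivAt f (f' t) t)
    (hf' : ContinuousOn f' (Set.Icc (0 : ℝ) 1))
    (n : ℕ) (hn : 1 < n) (x : ℝ) (hx : x ∈ Set.Icc (0 : ℝ) 1) :
    |Rop n f x - f x| ≤
      ((4 + 6 * Real.sqrt 3) / 27) * (n : ℝ) ^ (-(1 : ℝ) / 2) *
        modulus f' 0 1 ((n : ℝ) ^ (-(1 : ℝ) / 2)) := by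
  set δ : ℝ := (n : ℝ) ^ (-(1 : ℝ) / 2)
  have hn₀ : (0 : ℝ) < n := by positivity
  have hδ : 0 < δ := by positivity
  have hδsq : δ ^ 2 = 1 / n := by
    rw [← Real.rpow_natCast, ← Real.rpow_mul hn₀.le]
    norm_num [Real.rpow_neg_one]
  have hnodes : ∀ k ∈ range (n + 1), (k : ℝ) / n ∈ Icc (0 : ℝ) 1 := fun k hk =>
    ⟨by positivity,
      div_le_one_of_le₀ (by exact_mod_cast Nat.lt_succ_iff.mp (mem_range.mp hk)) hn₀.le⟩
  have hrfac : rfac (x + (1 - x)) (ropIncrement n x) n ≠ 0 := by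
    simpa using (rfac_one_ropIncrement_pos hx).ne'
  have hsqrt : √(4 / 27 : ℝ) = 2 * √3 / 9 := by
    rw [show (4 / 27 : ℝ) = (2 * √3 / 9) ^ 2 by
      rw [div_pow, mul_pow, Real.sq_sqrt zero_le_three]; norm_num, Real.sqrt_sq (by positivity)]
  calc |Rop n f x - f x|
      ≤ _ := abs_sum_mul_sub_le_modulus (range (n + 1)) hf hf' hδ hx hnodes
          (fun k hk => polyaProb_ropIncrement_nonneg hx (Nat.lt_succ_iff.mp (mem_range.mp hk)))
          (sum_polyaProb hrfac)
          (sum_polyaProb_mul_cast_div (by omega) (rfac_one_ropIncrement_pos hx).ne')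
    _ ≤ ((√(4 / 27) + 4 / 27) * δ) * modulus f' 0 1 δ := by
        gcongr
        · exact modulus_nonneg f' 0 1 δ
        · exact sqrt_add_div_le_of_le_mul_sq hδ
            (hδsq ▸ sum_polyaProb_ropIncrement_mul_sq_sub_le hx hn)
    _ = _ := by rw [hsqrt]; ring
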